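/- With the quadratic symbol q₀₁ and the symbol c(ξ₁,ξ₂) := [(m − 2ξ₁ξ₂)q₀₁(ξ₁,ξ₂) − 2(ξ₂² + m)q₀₁(ξ₂,ξ₁)]/Δ(ξ₁,ξ₂), define c₀²(ξ) := −g¹¹_{uₜ}/2 + (i/m)g⁰¹_u ξ − ((2g⁰¹_{uₓ} + g¹¹_{uₜ})/(2m))ξ² and c₁²(ξ) := −(i/2)g⁰¹_u + (1/2)(g¹¹_{uₜ} − g⁰¹_{uₓ} + f_{uₜu}/m)ξ − (i/m)g⁰¹_u ξ². Then there exists C > 0 such that for all real ξ₁, ξ₂ with ⟨ξ₂⟩ ≤ ⟨ξ₁⟩/20 one has |c(ξ₁,ξ₂) − c₀²(ξ₂) − c₁²(ξ₂)/ξ₁| ≤ C(1 + ξ₂⁴)/ξ₁², where ⟨ξ⟩ := (1 + ξ²)^{1/2}. -/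

import Mathlib

open Complex

/-- The quadratic symbol
`q₀₁(ξ₁,ξ₂) = f_{uₜu} + 2i g⁰¹_u ξ₁ − 2 g⁰¹_{uₓ} ξ₁ξ₂ − g¹¹_{uₜ} ξ₂²`. -/
noncomputable def q01 (futu g01u g01ux g11ut : ℝ) (ξ₁ ξ₂ : ℝ) : ℂ :=
  (futu : ℂ) + 2 * Complex.I * g01u * ξ₁ - 2 * g01ux * ξ₁ * ξ₂
    - (g11ut : ℂ) * (ξ₂ : ℂ)^2

/-- The denominator `Δ(ξ₁,ξ₂) = (m − 2ξ₁ξ₂)² − 4(ξ₁² + m)(ξ₂² + m)`. -/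
noncomputable def Δc (m ξ₁ ξ₂ : ℝ) : ℂ :=
  ((m : ℂ) - 2*ξ₁*ξ₂)^2 - 4*((ξ₁ : ℂ)^2 + m)*((ξ₂ : ℂ)^2 + m)

/-- The (non-symmetric) normal form symbol
`c(ξ₁,ξ₂) = [(m − 2ξ₁ξ₂)q₀₁(ξ₁,ξ₂) − 2(ξ₂² + m)q₀₁(ξ₂,ξ₁)]/Δ(ξ₁,ξ₂)`. -/
noncomputable def cSym (m futu g01u g01ux g11ut : ℝ) (ξ₁ ξ₂ : ℝ) : ℂ :=
  (((m : ℂ) - 2*ξ₁*ξ₂) * q01 futu g01u g01ux g11ut ξ₁ ξ₂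
    - 2*((ξ₂ : ℂ)^2 + m) * q01 futu g01u g01ux g11ut ξ₂ ξ₁) / Δc m ξ₁ ξ₂

/-- First high–low Taylor coefficient
`c₀²(ξ) = −g¹¹_{uₜ}/2 + (i/m)g⁰¹_u ξ − ((2g⁰¹_{uₓ} + g¹¹_{uₜ})/(2m))ξ²`. -/
noncomputable def c02 (m g01u g01ux g11ut : ℝ) (ξ : ℝ) : ℂ :=
  -(g11ut : ℂ)/2 + Complex.I/m * g01u * ξ
    - (2*(g01ux : ℂ) + g11ut)/(2*m) * (ξ : ℂ)^2

/-- Second high–low Taylor coefficient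
`c₁²(ξ) = −(i/2)g⁰¹_u + (1/2)(g¹¹_{uₜ} − g⁰¹_{uₓ} + f_{uₜu}/m)ξ − (i/m)g⁰¹_u ξ²`. -/
noncomputable def c12 (m futu g01u g01ux g11ut : ℝ) (ξ : ℝ) : ℂ :=
  -(Complex.I/2) * g01u
    + (1/2) * ((g11ut : ℂ) - g01ux + (futu : ℂ)/m) * ξ
    - Complex.I/m * g01u * (ξ : ℂ)^2

/-!
With `s = ξ₁² + ξ₁ξ₂ + ξ₂²` one has `Δ = -m(3m + 4s)`, and `s ≥ 3ξ₁²/4`, so `|Δ| ≥ 3mξ₁²`.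
Over the common denominator `2ξ₁Δ`, the coefficients `c₀²`, `c₁²` are exactly what cancels the
terms of degree `3` and `2` in `ξ₁` of the numerator, which leaves `P₀(ξ₂) + ξ₁P₁(ξ₂)` with
`P₀, P₁` quartic in `ξ₂`. For `|ξ₁| ≥ 1` this is `O((1 + ξ₂⁴)|ξ₁|)` against a denominator of
size at least `6m|ξ₁|³`.
-/

lemma pow_le_one_add_pow {x : ℝ} (hx : 0 ≤ x) {j n : ℕ} (hjn : j ≤ n) : x ^ j ≤ 1 + x ^ n := by
  rcases le_total x 1 with hx1 | hx1
  · linarith [pow_le_one₀ (n := j) hx hx1, pow_nonneg hx n]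
  · linarith [pow_le_pow_right₀ hx1 hjn]

lemma norm_sum_mul_pow_le {n : ℕ} (a : Fin (n + 1) → ℂ) (x : ℝ) :
    ‖∑ j, a j * (x : ℂ) ^ (j : ℕ)‖ ≤ (∑ j, ‖a j‖) * (1 + |x| ^ n) := by
  rw [Finset.sum_mul]
  refine (norm_sum_le _ _).trans (Finset.sum_le_sum fun j _ => ?_)
  rw [norm_mul, norm_pow, Complex.norm_real, Real.norm_eq_abs]
  exact mul_le_mul_of_nonneg_left
    (pow_le_one_add_pow (abs_nonneg x) (Nat.lt_succ_iff.mp j.isLt)) (norm_nonneg _)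

lemma Δc_eq (m ξ₁ ξ₂ : ℝ) :
    Δc m ξ₁ ξ₂ = -((m * (3 * m + 4 * (ξ₁ ^ 2 + ξ₁ * ξ₂ + ξ₂ ^ 2)) : ℝ) : ℂ) := by
  rw [Δc]; push_cast; ring

lemma three_mul_sq_le_norm_Δc {m : ℝ} (hm : 0 ≤ m) (ξ₁ ξ₂ : ℝ) :
    3 * m * ξ₁ ^ 2 ≤ ‖Δc m ξ₁ ξ₂‖ := by
  have hs : 3 / 4 * ξ₁ ^ 2 ≤ ξ₁ ^ 2 + ξ₁ * ξ₂ + ξ₂ ^ 2 := by nlinarith [sq_nonneg (ξ₁ + 2 * ξ₂)]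
  rw [Δc_eq, norm_neg, Complex.norm_real, Real.norm_eq_abs]
  refine le_trans ?_ (le_abs_self _)
  nlinarith [mul_le_mul_of_nonneg_left hs hm]

lemma Δc_ne_zero {m : ℝ} (hm : 0 < m) (ξ₁ ξ₂ : ℝ) : Δc m ξ₁ ξ₂ ≠ 0 := by
  have hs : 0 ≤ ξ₁ ^ 2 + ξ₁ * ξ₂ + ξ₂ ^ 2 := by nlinarith [sq_nonneg (ξ₁ + 2 * ξ₂), sq_nonneg ξ₂]
  rw [Δc_eq, neg_ne_zero, Complex.ofReal_ne_zero]
  positivity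

def expansionErrorCoeff₀ (m futu g01u g01ux g11ut : ℝ) : Fin 5 → ℂ :=
  ![-3 * m ^ 2 * g01u * I, 3 * m * (futu + m * (g11ut - g01ux)), -10 * m * g01u * I,
    4 * (futu + m * (g11ut - g01ux)), -8 * g01u * I]

def expansionErrorCoeff₁ (m futu g01u g01ux g11ut : ℝ) : Fin 5 → ℂ :=
  ![-m * (2 * futu + 3 * m * g11ut), -6 * m * g01u * I, -5 * m * (g11ut + 2 * g01ux),
    -8 * g01u * I, -4 * (g11ut + 2 * g01ux)]

lemma cSym_sub_expansion_eq {m : ℝ} (hm : 0 < m) (futu g01u g01ux g11ut : ℝ) {ξ₁ : ℝ}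
    (hξ₁ : ξ₁ ≠ 0) (ξ₂ : ℝ) :
    cSym m futu g01u g01ux g11ut ξ₁ ξ₂ - c02 m g01u g01ux g11ut ξ₂
        - c12 m futu g01u g01ux g11ut ξ₂ / ξ₁ =
      (∑ j, expansionErrorCoeff₀ m futu g01u g01ux g11ut j * (ξ₂ : ℂ) ^ (j : ℕ)
          + ξ₁ * ∑ j, expansionErrorCoeff₁ m futu g01u g01ux g11ut j * (ξ₂ : ℂ) ^ (j : ℕ))
        / (2 * ξ₁ * Δc m ξ₁ ξ₂) := by
  have hΔ := Δc_ne_zero hm ξ₁ ξ₂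
  have hm' : (m : ℂ) ≠ 0 := by exact_mod_cast hm.ne'
  have hξ₁' : (ξ₁ : ℂ) ≠ 0 := by exact_mod_cast hξ₁
  rw [eq_div_iff (by simp [hΔ, hξ₁']), cSym, c02, c12]
  simp only [Fin.sum_univ_five, expansionErrorCoeff₀, expansionErrorCoeff₁, q01, Fin.isValue,
    Matrix.cons_val, Fin.coe_ofNat_eq_mod, Nat.reduceMod]
  field_simp
  rw [Δc]
  ring

lemma norm_cSym_sub_expansion_le {m : ℝ} (hm : 0 < m) (futu g01u g01ux g11ut : ℝ) {ξ₁ : ℝ}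
    (hξ₁ : 1 ≤ |ξ₁|) (ξ₂ : ℝ) :
    ‖cSym m futu g01u g01ux g11ut ξ₁ ξ₂ - c02 m g01u g01ux g11ut ξ₂
        - c12 m futu g01u g01ux g11ut ξ₂ / ξ₁‖ ≤
      (∑ j, ‖expansionErrorCoeff₀ m futu g01u g01ux g11ut j‖
          + ∑ j, ‖expansionErrorCoeff₁ m futu g01u g01ux g11ut j‖) * (1 + ξ₂ ^ 4)
        / (6 * m * ξ₁ ^ 2) := by
  have hξ₁0 : ξ₁ ≠ 0 := abs_pos.mp (one_pos.trans_le hξ₁)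
  rw [cSym_sub_expansion_eq hm _ _ _ _ hξ₁0, norm_div]
  set K₀ := ∑ j, ‖expansionErrorCoeff₀ m futu g01u g01ux g11ut j‖
  set K₁ := ∑ j, ‖expansionErrorCoeff₁ m futu g01u g01ux g11ut j‖
  have habs4 : |ξ₂| ^ 4 = ξ₂ ^ 4 := Even.pow_abs (by decide) ξ₂
  have hnum : ‖∑ j, expansionErrorCoeff₀ m futu g01u g01ux g11ut j * (ξ₂ : ℂ) ^ (j : ℕ)
        + ξ₁ * ∑ j, expansionErrorCoeff₁ m futu g01u g01ux g11ut j * (ξ₂ : ℂ) ^ (j : ℕ)‖ ≤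
      (K₀ + K₁) * (1 + ξ₂ ^ 4) * |ξ₁| := by
    have h₀ := norm_sum_mul_pow_le (expansionErrorCoeff₀ m futu g01u g01ux g11ut) ξ₂
    have h₁ := norm_sum_mul_pow_le (expansionErrorCoeff₁ m futu g01u g01ux g11ut) ξ₂
    rw [habs4] at h₀ h₁
    calc _ ≤ _ + |ξ₁| * _ := by
          refine (norm_add_le _ _).trans_eq ?_
          rw [norm_mul, Complex.norm_real, Real.norm_eq_abs]
      _ ≤ K₀ * (1 + ξ₂ ^ 4) * |ξ₁| + |ξ₁| * (K₁ * (1 + ξ₂ ^ 4)) := by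
          gcongr
          exact h₀.trans (le_mul_of_one_le_right (by positivity) hξ₁)
      _ = (K₀ + K₁) * (1 + ξ₂ ^ 4) * |ξ₁| := by ring
  have hden : 6 * m * |ξ₁| ^ 3 ≤ ‖2 * (ξ₁ : ℂ) * Δc m ξ₁ ξ₂‖ := by
    rw [norm_mul, norm_mul, Complex.norm_two, Complex.norm_real, Real.norm_eq_abs]
    have := mul_le_mul_of_nonneg_left (three_mul_sq_le_norm_Δc hm.le ξ₁ ξ₂)
      (by positivity : (0 : ℝ) ≤ 2 * |ξ₁|)
    rw [← sq_abs ξ₁] at this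
    linarith
  calc _ ≤ (K₀ + K₁) * (1 + ξ₂ ^ 4) * |ξ₁| / (6 * m * |ξ₁| ^ 3) :=
        div_le_div₀ (by positivity) hnum (by positivity) hden
    _ = (K₀ + K₁) * (1 + ξ₂ ^ 4) / (6 * m * ξ₁ ^ 2) := by
        rw [← sq_abs ξ₁]
        field_simp

lemma one_le_abs_of_sqrt_one_add_sq_le {x y : ℝ} (h : √(1 + y ^ 2) ≤ √(1 + x ^ 2) / 20) :
    1 ≤ |x| := by
  have hy : 1 ≤ √(1 + y ^ 2) := Real.one_le_sqrt.mpr (by nlinarith [sq_nonneg y])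
  have hx : (20 : ℝ) ≤ √(1 + x ^ 2) := by linarith
  rw [Real.le_sqrt' (by norm_num)] at hx
  exact (one_le_sq_iff_one_le_abs x).mp (by linarith)

theorem cSym_high_low_expansion_general (m futu g01u g01ux g11ut : ℝ)
    (hm : 0 < m) :
    ∃ C > 0, ∀ ξ₁ ξ₂ : ℝ,
      Real.sqrt (1 + ξ₂^2) ≤ Real.sqrt (1 + ξ₁^2) / 20 →
      ‖cSym m futu g01u g01ux g11ut ξ₁ ξ₂
          - c02 m g01u g01ux g11ut ξ₂ - c12 m futu g01u g01ux g11ut ξ₂ / ξ₁‖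
        ≤ C * (1 + ξ₂^4) / ξ₁^2 := by
  set K := ∑ j, ‖expansionErrorCoeff₀ m futu g01u g01ux g11ut j‖
    + ∑ j, ‖expansionErrorCoeff₁ m futu g01u g01ux g11ut j‖
  refine ⟨(K + 1) / (6 * m), by positivity, fun ξ₁ ξ₂ h => ?_⟩
  have hξ₁ := one_le_abs_of_sqrt_one_add_sq_le h
  calc _ ≤ K * (1 + ξ₂ ^ 4) / (6 * m * ξ₁ ^ 2) :=
        norm_cSym_sub_expansion_le hm futu g01u g01ux g11ut hξ₁ ξ₂
    _ = K / (6 * m) * (1 + ξ₂ ^ 4) / ξ₁ ^ 2 := by ring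
    _ ≤ (K + 1) / (6 * m) * (1 + ξ₂ ^ 4) / ξ₁ ^ 2 := by gcongr; linarith

/-- High–low symbol expansion of the non-symmetric normal form correction `C`:
`|c(ξ₁,ξ₂) − c₀²(ξ₂) − c₁²(ξ₂)/ξ₁| ≤ C(1 + ξ₂⁴)/ξ₁²` for `⟨ξ₂⟩ ≤ ⟨ξ₁⟩/20`. -/
theorem cSym_high_low_expansion (m fuu futut futu g01u g01ut g01ux g11u g11ut g11ux : ℝ)
    (hm : 0 < m) :
    ∃ C > 0, ∀ ξ₁ ξ₂ : ℝ,
      Real.sqrt (1 + ξ₂^2) ≤ Real.sqrt (1 + ξ₁^2) / 20 →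
      ‖cSym m futu g01u g01ux g11ut ξ₁ ξ₂
          - c02 m g01u g01ux g11ut ξ₂ - c12 m futu g01u g01ux g11ut ξ₂ / ξ₁‖
        ≤ C * (1 + ξ₂^4) / ξ₁^2 :=
  cSym_high_low_expansion_general m futu g01u g01ux g11ut hm
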